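/- Let Q be a 4^n × 4^n complex matrix such that [H ⊗ I + I ⊗ H, Q] = 0 for every generator H ∈ {Z_j : 1 ≤ j ≤ n} ∪ {X_j X_{j+1} : 1 ≤ j ≤ n−1} (I the 2^n × 2^n identity). Suppose S and S′ are n-qubit Pauli strings (Kronecker products over the n qubits of matrices from {I, X, Y, Z}) such that Tr((S ⊗ S′) · Q) ≠ 0. Then the product S′ · S commutes with every generator H, and hence S′ · S lies in the complex span of I^{⊗n} and Z^{⊗n}. -/
import Mathlib


open Matrix Complex
open scoped Kronecker

noncomputable section

abbrev QIdx (n : ℕ) := Fin n → Fin 2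
abbrev NMat (n : ℕ) := Matrix (QIdx n) (QIdx n) ℂ
abbrev NMat2 (n : ℕ) := Matrix (QIdx n × QIdx n) (QIdx n × QIdx n) ℂ

/-- The 2×2 Pauli X matrix. -/
def σX : Matrix (Fin 2) (Fin 2) ℂ := !![0, 1; 1, 0]
/-- The 2×2 Pauli Y matrix. -/
def σY : Matrix (Fin 2) (Fin 2) ℂ := !![0, -Complex.I; Complex.I, 0]
/-- The 2×2 Pauli Z matrix. -/
def σZ : Matrix (Fin 2) (Fin 2) ℂ := !![1, 0; 0, -1]

/-- Tensor (Kronecker) product of `n` one-qubit matrices, realized on index type `Fin n → Fin 2`. -/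
def tensor {n : ℕ} (M : Fin n → Matrix (Fin 2) (Fin 2) ℂ) : NMat n :=
  Matrix.of fun f g => ∏ i, M i (f i) (g i)

/-- The Jordan–Wigner Majorana operator `c_μ` (0-based index: `c_{2i} = Z^{⊗i} X I…`,
`c_{2i+1} = Z^{⊗i} Y I…`). -/
def majorana (n : ℕ) (μ : Fin (2 * n)) : NMat n :=
  tensor fun j =>
    if (j : ℕ) < (μ : ℕ) / 2 then σZ
    else if (j : ℕ) = (μ : ℕ) / 2 then (if (μ : ℕ) % 2 = 0 then σX else σY)
    else 1

/-- Ordered product `c^s` of the Majorana operators indexed by a subset `s`. -/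
def cProd (n : ℕ) (s : Finset (Fin (2 * n))) : NMat n :=
  ((s.sort (· ≤ ·)).map (majorana n)).prod

/-- The module `B_κ`: the complex span of products of `κ` distinct Majoranas. -/
def Bspace (n κ : ℕ) : Submodule ℂ (NMat n) :=
  Submodule.span ℂ {M | ∃ s : Finset (Fin (2 * n)), s.card = κ ∧ M = cProd n s}

/-- The Pauli string with `Z` on qubit `j` and identity elsewhere. -/
def pauliZ (n : ℕ) (j : Fin n) : NMat n := tensor fun k => if k = j then σZ else 1

/-- The Pauli string with `X` on qubits `j` and `j+1` and identity elsewhere. -/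
def pauliXX (n : ℕ) (j : Fin n) : NMat n :=
  tensor fun k => if (k : ℕ) = (j : ℕ) ∨ (k : ℕ) = (j : ℕ) + 1 then σX else 1

/-- The parity operator `P = Z^{⊗n}`. -/
def parity (n : ℕ) : NMat n := tensor fun _ => σZ


/-- Normalization constant `(d √C(2n,κ))⁻¹` with `d = 2^n`. -/
def Qnorm (n κ : ℕ) : ℂ := ((2 ^ n : ℂ) * ((Real.sqrt (Nat.choose (2 * n) κ) : ℝ) : ℂ))⁻¹

/-- The quadratic symmetry `Q_κ^0 = (d √C(2n,κ))⁻¹ Σ_{|s|=κ} c^s ⊗ c^s`. -/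
def Q0 (n κ : ℕ) : NMat2 n :=
  Qnorm n κ • ∑ s ∈ Finset.powersetCard κ (Finset.univ : Finset (Fin (2 * n))),
    (cProd n s) ⊗ₖ (cProd n s)

/-- The sum of the (1-based) elements of `s`, i.e. `π(s)`. -/
def piSum (n : ℕ) (s : Finset (Fin (2 * n))) : ℕ := ∑ μ ∈ s, ((μ : ℕ) + 1)

/-- The quadratic symmetry
`Q_κ^1 = (d √C(2n,κ))⁻¹ (−i)^n i^{κ mod 2} Σ_{|s|=κ} (−1)^{π(s)} c^s ⊗ c^{s̄}`. -/
def Q1 (n κ : ℕ) : NMat2 n :=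
  (Qnorm n κ * (-Complex.I) ^ n * Complex.I ^ (κ % 2)) •
    ∑ s ∈ Finset.powersetCard κ (Finset.univ : Finset (Fin (2 * n))),
      ((-1 : ℂ)) ^ (piSum n s) • ((cProd n s) ⊗ₖ (cProd n sᶜ))

/-- The matchgate circuit generators `{Z_j} ∪ {X_j X_{j+1}}`. -/
def matchgateGens (n : ℕ) : Set (NMat n) :=
  {M | ∃ j : Fin n, M = pauliZ n j} ∪
  {M | ∃ j : Fin n, (j : ℕ) + 1 < n ∧ M = pauliXX n j}

/-- The two-copy representation `H ⊗ I + I ⊗ H` of a generator `H`. -/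
def bigH (n : ℕ) (H : NMat n) : NMat2 n :=
  H ⊗ₖ (1 : NMat n) + (1 : NMat n) ⊗ₖ H

/-- An `n`-qubit Pauli string: a Kronecker product of matrices from `{I, X, Y, Z}`. -/
def IsPauliString (n : ℕ) (S : NMat n) : Prop :=
  ∃ f : Fin n → Matrix (Fin 2) (Fin 2) ℂ,
    (∀ j, f j = 1 ∨ f j = σX ∨ f j = σY ∨ f j = σZ) ∧ S = tensor f

/-! ### Auxiliary lemmas -/

abbrev Mat2 := Matrix (Fin 2) (Fin 2) ℂ

lemma aux_tensor_mul {n : ℕ} (f g : Fin n → Mat2) :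
    tensor f * tensor g = tensor fun i => f i * g i := by
  ext a b
  simp only [tensor, Matrix.mul_apply, Matrix.of_apply]
  calc ∑ c : QIdx n, (∏ i, f i (a i) (c i)) * ∏ i, g i (c i) (b i)
      = ∑ c : QIdx n, ∏ i, (f i (a i) (c i) * g i (c i) (b i)) := by
        refine Finset.sum_congr rfl fun c _ => ?_
        rw [Finset.prod_mul_distrib]
    _ = ∏ i, ∑ x : Fin 2, f i (a i) x * g i x (b i) :=
        (Fintype.prod_sum (κ := fun _ : Fin n => Fin 2) fun i x => f i (a i) x * g i x (b i)).symm
    _ = ∏ i, (f i * g i) (a i) (b i) :=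
        Finset.prod_congr rfl fun i _ => (Matrix.mul_apply).symm

lemma aux_tensor_smul {n : ℕ} (c : Fin n → ℂ) (M : Fin n → Mat2) :
    tensor (fun i => c i • M i) = (∏ i, c i) • tensor M := by
  ext a b
  simp only [tensor, Matrix.of_apply, Matrix.smul_apply, smul_eq_mul,
    Finset.prod_mul_distrib]

lemma aux_tensor_one {n : ℕ} : tensor (fun _ : Fin n => (1 : Mat2)) = 1 := by
  ext a b
  simp only [tensor, Matrix.of_apply, Matrix.one_apply]
  by_cases h : a = b
  · subst h; simp
  · rw [if_neg h]
    obtain ⟨i, hi⟩ := Function.ne_iff.mp h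
    exact Finset.prod_eq_zero (Finset.mem_univ i) (by simp [hi])

lemma hXX : σX * σX = 1 := by
  ext i j; fin_cases i <;> fin_cases j <;>
    simp [σX, Matrix.mul_apply, Fin.sum_univ_two, Matrix.one_apply]
lemma hYY : σY * σY = 1 := by
  ext i j; fin_cases i <;> fin_cases j <;>
    simp [σY, Matrix.mul_apply, Fin.sum_univ_two, Matrix.one_apply]
lemma hZZ : σZ * σZ = 1 := by
  ext i j; fin_cases i <;> fin_cases j <;>
    simp [σZ, Matrix.mul_apply, Fin.sum_univ_two, Matrix.one_apply]
lemma hXY : σX * σY = Complex.I • σZ := by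
  ext i j; fin_cases i <;> fin_cases j <;>
    simp [σX, σY, σZ, Matrix.mul_apply, Fin.sum_univ_two]
lemma hYX : σY * σX = (-Complex.I) • σZ := by
  ext i j; fin_cases i <;> fin_cases j <;>
    simp [σX, σY, σZ, Matrix.mul_apply, Fin.sum_univ_two]
lemma hXZ : σX * σZ = (-Complex.I) • σY := by
  ext i j; fin_cases i <;> fin_cases j <;>
    simp [σX, σY, σZ, Matrix.mul_apply, Fin.sum_univ_two]
lemma hZX : σZ * σX = Complex.I • σY := by
  ext i j; fin_cases i <;> fin_cases j <;>
    simp [σX, σY, σZ, Matrix.mul_apply, Fin.sum_univ_two]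
lemma hYZ : σY * σZ = Complex.I • σX := by
  ext i j; fin_cases i <;> fin_cases j <;>
    simp [σX, σY, σZ, Matrix.mul_apply, Fin.sum_univ_two]
lemma hZY : σZ * σY = (-Complex.I) • σX := by
  ext i j; fin_cases i <;> fin_cases j <;>
    simp [σX, σY, σZ, Matrix.mul_apply, Fin.sum_univ_two]

lemma σX_ne : σX ≠ 0 := fun h => by
  simpa [σX] using congrFun (congrFun h 0) 1
lemma σY_ne : σY ≠ 0 := fun h => by
  simpa [σY, Complex.ext_iff] using congrFun (congrFun h 0) 1
lemma one_ne : (1 : Mat2) ≠ 0 := fun h => by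
  simpa [Matrix.one_apply] using congrFun (congrFun h 0) 0

lemma aux_smul_cancel {c d : ℂ} {M : Mat2} (hM : M ≠ 0) (h : c • M = d • M) : c = d := by
  by_contra hcd
  have h2 : (c - d) • M = 0 := by rw [sub_smul, h, sub_self]
  rcases smul_eq_zero.mp h2 with h3 | h3
  · exact hcd (sub_eq_zero.mp h3)
  · exact hM h3

lemma nZX : σZ * σX ≠ σX * σZ := by
  rw [hZX, hXZ]
  intro h
  have h2 := aux_smul_cancel σY_ne h
  have h0 : Complex.I = 0 := by linear_combination h2 / 2
  exact Complex.I_ne_zero h0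

lemma nZY : σZ * σY ≠ σY * σZ := by
  rw [hZY, hYZ]
  intro h
  have h2 := aux_smul_cancel σX_ne h
  have h0 : Complex.I = 0 := by linear_combination -h2 / 2
  exact Complex.I_ne_zero h0

lemma hXZcomm : σX * σZ = (-1 : ℂ) • (σZ * σX) := by
  rw [hXZ, hZX, smul_smul]; norm_num

def IsP (P : Mat2) : Prop := P = 1 ∨ P = σX ∨ P = σY ∨ P = σZ

lemma zsign {P : Mat2} (hP : IsP P) : ∃ z : ℂ, z * z = 1 ∧ σZ * P = z • (P * σZ) := by
  rcases hP with rfl | rfl | rfl | rfl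
  · exact ⟨1, by norm_num, by rw [mul_one, one_mul, one_smul]⟩
  · exact ⟨-1, by norm_num, by rw [hZX, hXZ, smul_smul]; norm_num⟩
  · exact ⟨-1, by norm_num, by rw [hZY, hYZ, smul_smul]; norm_num⟩
  · exact ⟨1, by norm_num, by rw [one_smul]⟩

lemma xsign {P : Mat2} (hP : IsP P) : ∃ x : ℂ, x * x = 1 ∧ σX * P = x • (P * σX) := by
  rcases hP with rfl | rfl | rfl | rfl
  · exact ⟨1, by norm_num, by rw [mul_one, one_mul, one_smul]⟩
  · exact ⟨1, by norm_num, by rw [one_smul]⟩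
  · exact ⟨-1, by norm_num, by rw [hXY, hYX, smul_smul]; norm_num⟩
  · exact ⟨-1, by norm_num, by rw [hXZ, hZX, smul_smul]; norm_num⟩

lemma pauli_mul {P Q : Mat2} (hP : IsP P) (hQ : IsP Q) :
    ∃ (c : ℂ) (R : Mat2), c ≠ 0 ∧ IsP R ∧ Q * P = c • R := by
  have hI : (Complex.I : ℂ) ≠ 0 := Complex.I_ne_zero
  have hnI : (-Complex.I : ℂ) ≠ 0 := neg_ne_zero.mpr Complex.I_ne_zero
  rcases hP with rfl | rfl | rfl | rfl <;> rcases hQ with rfl | rfl | rfl | rfl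
  · exact ⟨1, 1, one_ne_zero, Or.inl rfl, by simp⟩
  · exact ⟨1, σX, one_ne_zero, Or.inr (Or.inl rfl), by simp⟩
  · exact ⟨1, σY, one_ne_zero, Or.inr (Or.inr (Or.inl rfl)), by simp⟩
  · exact ⟨1, σZ, one_ne_zero, Or.inr (Or.inr (Or.inr rfl)), by simp⟩
  · exact ⟨1, σX, one_ne_zero, Or.inr (Or.inl rfl), by simp⟩
  · exact ⟨1, 1, one_ne_zero, Or.inl rfl, by rw [hXX, one_smul]⟩
  · exact ⟨-Complex.I, σZ, hnI, Or.inr (Or.inr (Or.inr rfl)), hYX⟩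
  · exact ⟨Complex.I, σY, hI, Or.inr (Or.inr (Or.inl rfl)), hZX⟩
  · exact ⟨1, σY, one_ne_zero, Or.inr (Or.inr (Or.inl rfl)), by simp⟩
  · exact ⟨Complex.I, σZ, hI, Or.inr (Or.inr (Or.inr rfl)), hXY⟩
  · exact ⟨1, 1, one_ne_zero, Or.inl rfl, by rw [hYY, one_smul]⟩
  · exact ⟨-Complex.I, σX, hnI, Or.inr (Or.inl rfl), hZY⟩
  · exact ⟨1, σZ, one_ne_zero, Or.inr (Or.inr (Or.inr rfl)), by simp⟩
  · exact ⟨-Complex.I, σY, hnI, Or.inr (Or.inr (Or.inl rfl)), hXZ⟩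
  · exact ⟨Complex.I, σX, hI, Or.inr (Or.inl rfl), hYZ⟩
  · exact ⟨1, 1, one_ne_zero, Or.inl rfl, by rw [hZZ, one_smul]⟩

lemma tensor_comm_sign {n : ℕ} (h f : Fin n → Mat2) (c : Fin n → ℂ)
    (hc : ∀ k, h k * f k = c k • (f k * h k)) :
    tensor h * tensor f = (∏ k, c k) • (tensor f * tensor h) := by
  rw [aux_tensor_mul, aux_tensor_mul,
    show (fun i => h i * f i) = fun i => c i • (f i * h i) from funext hc]
  exact aux_tensor_smul c _

lemma prod_two {n : ℕ} (j1 j2 : Fin n) (h : j1 ≠ j2) (a b : ℂ) :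
    ∏ k, (if k = j1 then a else if k = j2 then b else 1) = a * b := by
  rw [← Finset.mul_prod_erase Finset.univ _ (Finset.mem_univ j1), if_pos rfl]
  congr 1
  rw [← Finset.mul_prod_erase _ _
      (Finset.mem_erase.mpr ⟨Ne.symm h, Finset.mem_univ j2⟩),
    if_neg (Ne.symm h), if_pos rfl]
  rw [Finset.prod_eq_one, mul_one]
  intro k hk
  simp only [Finset.mem_erase] at hk
  rw [if_neg hk.2.1, if_neg hk.1]

lemma pauliZ_sign {n : ℕ} (j : Fin n) (f : Fin n → Mat2) (z : ℂ)
    (hz : σZ * f j = z • (f j * σZ)) :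
    pauliZ n j * tensor f = z • (tensor f * pauliZ n j) := by
  rw [pauliZ]
  have key := tensor_comm_sign (fun k => if k = j then σZ else 1) f
      (fun k => if k = j then z else 1) ?_
  · rw [key]
    congr 1
    simp
  · intro k
    by_cases hk : k = j
    · subst hk; simp only [if_pos rfl]; exact hz
    · simp [hk]

lemma pauliXX_sign {n : ℕ} (j : Fin n) (hj : (j : ℕ) + 1 < n) (f : Fin n → Mat2)
    (x1 x2 : ℂ) (h1 : σX * f j = x1 • (f j * σX))
    (h2 : σX * f ⟨(j : ℕ) + 1, hj⟩ = x2 • (f ⟨(j : ℕ) + 1, hj⟩ * σX)) :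
    pauliXX n j * tensor f = (x1 * x2) • (tensor f * pauliXX n j) := by
  rw [pauliXX]
  have key := tensor_comm_sign (fun k => if (k : ℕ) = (j : ℕ) ∨ (k : ℕ) = (j : ℕ) + 1 then σX else 1) f
      (fun k => if k = j then x1 else if k = ⟨(j : ℕ) + 1, hj⟩ then x2 else 1) ?_
  · rw [key, prod_two j ⟨(j : ℕ) + 1, hj⟩ (by simp [Fin.ext_iff]) x1 x2]
  · intro k
    by_cases hk1 : k = j
    · subst hk1
      rw [if_pos (Or.inl rfl), if_pos rfl]
      exact h1
    · by_cases hk2 : k = ⟨(j : ℕ) + 1, hj⟩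
      · subst hk2
        rw [if_pos (Or.inr rfl), if_neg hk1, if_pos rfl]
        exact h2
      · have hcond : ¬((k : ℕ) = (j : ℕ) ∨ (k : ℕ) = (j : ℕ) + 1) := by
          push_neg
          exact ⟨fun h => hk1 (Fin.ext h), fun h => hk2 (Fin.ext h)⟩
        rw [if_neg hcond, if_neg hk1, if_neg hk2]
        simp

lemma pauliZ_sq {n : ℕ} (j : Fin n) : pauliZ n j * pauliZ n j = 1 := by
  rw [pauliZ, aux_tensor_mul,
    show (fun k : Fin n => (if k = j then σZ else 1) * (if k = j then σZ else 1))
      = fun _ : Fin n => (1 : Mat2) from funext fun k => by split_ifs <;> simp [hZZ]]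
  exact aux_tensor_one

lemma pauliXX_sq {n : ℕ} (j : Fin n) : pauliXX n j * pauliXX n j = 1 := by
  rw [pauliXX, aux_tensor_mul,
    show (fun k : Fin n => (if (k : ℕ) = (j : ℕ) ∨ (k : ℕ) = (j : ℕ) + 1 then σX else 1)
        * (if (k : ℕ) = (j : ℕ) ∨ (k : ℕ) = (j : ℕ) + 1 then σX else 1))
      = fun _ : Fin n => (1 : Mat2) from funext fun k => by split_ifs <;> simp [hXX]]
  exact aux_tensor_one

lemma key_sign {n : ℕ} (Q : NMat2 n) (H : NMat n) (hHH : H * H = 1)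
    (hc : bigH n H * Q = Q * bigH n H) (S S' : NMat n) (ε ε' : ℂ)
    (hHS : H * S = ε • (S * H)) (hHS' : H * S' = ε' • (S' * H))
    (htr : Matrix.trace ((S ⊗ₖ S') * Q) ≠ 0) : ε * ε' = 1 := by
  have hK2 : (H ⊗ₖ H) * (H ⊗ₖ H) = (1 : NMat2 n) := by
    rw [← Matrix.mul_kronecker_mul, hHH, Matrix.one_kronecker_one]
  have hbig : bigH n H * bigH n H = ((1 : NMat2 n) + 1) + (H ⊗ₖ H + H ⊗ₖ H) := by
    rw [bigH, add_mul, mul_add, mul_add]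
    simp only [← Matrix.mul_kronecker_mul, hHH, one_mul, mul_one, Matrix.one_kronecker_one]
    abel
  have hcomm2 : bigH n H * bigH n H * Q = Q * (bigH n H * bigH n H) := by
    rw [mul_assoc, hc, ← mul_assoc, hc, mul_assoc]
  rw [hbig] at hcomm2
  have h3 : (H ⊗ₖ H + H ⊗ₖ H) * Q = Q * (H ⊗ₖ H + H ⊗ₖ H) := by
    rw [add_mul, mul_add] at hcomm2
    have h1q : ((1 : NMat2 n) + 1) * Q = Q * ((1 : NMat2 n) + 1) := by
      rw [add_mul, mul_add, one_mul, mul_one]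
    rw [h1q] at hcomm2
    exact add_left_cancel hcomm2
  have hKQ : (H ⊗ₖ H) * Q = Q * (H ⊗ₖ H) := by
    have h4 : (2 : ℂ) • ((H ⊗ₖ H) * Q) = (2 : ℂ) • (Q * (H ⊗ₖ H)) := by
      rw [two_smul, two_smul, ← add_mul, ← mul_add]
      exact h3
    exact smul_right_injective (NMat2 n) (two_ne_zero) h4
  have hKQK : (H ⊗ₖ H) * Q * (H ⊗ₖ H) = Q := by
    rw [hKQ, mul_assoc, hK2, mul_one]
  have hKSK : (H ⊗ₖ H) * (S ⊗ₖ S') * (H ⊗ₖ H) = (ε * ε') • (S ⊗ₖ S') := by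
    rw [← Matrix.mul_kronecker_mul, ← Matrix.mul_kronecker_mul]
    have e1 : H * S * H = ε • S := by
      rw [hHS, Matrix.smul_mul, mul_assoc, hHH, mul_one]
    have e2 : H * S' * H = ε' • S' := by
      rw [hHS', Matrix.smul_mul, mul_assoc, hHH, mul_one]
    rw [e1, e2, Matrix.smul_kronecker, Matrix.kronecker_smul, smul_smul]
  have htr2 : Matrix.trace ((S ⊗ₖ S') * Q)
      = (ε * ε') * Matrix.trace ((S ⊗ₖ S') * Q) := by
    conv_lhs => rw [← hKQK]
    calc Matrix.trace ((S ⊗ₖ S') * ((H ⊗ₖ H) * Q * (H ⊗ₖ H)))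
        = Matrix.trace ((S ⊗ₖ S') * (H ⊗ₖ H) * Q * (H ⊗ₖ H)) := by
          rw [← mul_assoc, ← mul_assoc]
      _ = Matrix.trace ((H ⊗ₖ H) * ((S ⊗ₖ S') * (H ⊗ₖ H) * Q)) :=
          Matrix.trace_mul_comm _ _
      _ = Matrix.trace (((H ⊗ₖ H) * (S ⊗ₖ S') * (H ⊗ₖ H)) * Q) := by
          rw [← mul_assoc, ← mul_assoc]
      _ = (ε * ε') * Matrix.trace ((S ⊗ₖ S') * Q) := by
          rw [hKSK, Matrix.smul_mul, Matrix.trace_smul, smul_eq_mul]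
  have h5 : (ε * ε' - 1) * Matrix.trace ((S ⊗ₖ S') * Q) = 0 := by
    linear_combination -htr2
  rcases mul_eq_zero.mp h5 with h6 | h6
  · linear_combination h6
  · exact absurd h6 htr

lemma comm_of_signs {n : ℕ} (H A B : NMat n) (ε ε' : ℂ)
    (h1 : H * A = ε • (A * H)) (h2 : H * B = ε' • (B * H)) (h : ε * ε' = 1) :
    H * (B * A) = (B * A) * H := by
  calc H * (B * A) = (H * B) * A := by rw [mul_assoc]
    _ = ε' • (B * (H * A)) := by rw [h2, Matrix.smul_mul, mul_assoc]
    _ = (ε * ε') • (B * A * H) := by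
        rw [h1, Matrix.mul_smul, smul_smul, mul_comm ε' ε, mul_assoc]
    _ = (B * A) * H := by rw [h, one_smul]
/-- If `Q` commutes with `H ⊗ I + I ⊗ H` for all matchgate generators and
`Tr((S ⊗ S′) Q) ≠ 0` for Pauli strings `S, S′`, then `S′ S` commutes with every generator
and lies in the span of the identity and the parity operator. -/

theorem pauli_pair_in_quadratic_symmetry (n : ℕ) (hn : 1 ≤ n) (Q : NMat2 n)
    (hQ : ∀ H ∈ matchgateGens n, bigH n H * Q = Q * bigH n H)
    (S S' : NMat n) (hS : IsPauliString n S) (hS' : IsPauliString n S')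
    (htr : Matrix.trace ((S ⊗ₖ S') * Q) ≠ 0) :
    (∀ H ∈ matchgateGens n, H * (S' * S) = (S' * S) * H)
    ∧ S' * S ∈ Submodule.span ℂ {(1 : NMat n), parity n} := by
  obtain ⟨f, hf, rfl⟩ := hS
  obtain ⟨g, hg, rfl⟩ := hS'
  choose zf hzf2 hzf using fun j => zsign (hf j)
  choose zg hzg2 hzg using fun j => zsign (hg j)
  choose xf hxf2 hxf using fun j => xsign (hf j)
  choose xg hxg2 hxg using fun j => xsign (hg j)
  have hZmem : ∀ j : Fin n, pauliZ n j ∈ matchgateGens n := fun j =>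
    Set.mem_union_left _ ⟨j, rfl⟩
  have hXmem : ∀ (j : Fin n), (j : ℕ) + 1 < n → pauliXX n j ∈ matchgateGens n := fun j hj =>
    Set.mem_union_right _ ⟨j, hj, rfl⟩
  have hZeq : ∀ j : Fin n, zf j * zg j = 1 := fun j =>
    key_sign Q (pauliZ n j) (pauliZ_sq j) (hQ _ (hZmem j)) _ _ _ _
      (pauliZ_sign j f (zf j) (hzf j)) (pauliZ_sign j g (zg j) (hzg j)) htr
  have hXeq : ∀ (j : Fin n) (hj : (j : ℕ) + 1 < n),
      (xf j * xf ⟨(j : ℕ) + 1, hj⟩) * (xg j * xg ⟨(j : ℕ) + 1, hj⟩) = 1 := fun j hj =>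
    key_sign Q (pauliXX n j) (pauliXX_sq j) (hQ _ (hXmem j hj)) _ _ _ _
      (pauliXX_sign j hj f (xf j) (xf ⟨(j : ℕ) + 1, hj⟩) (hxf j) (hxf _))
      (pauliXX_sign j hj g (xg j) (xg ⟨(j : ℕ) + 1, hj⟩) (hxg j) (hxg _)) htr
  have part1 : ∀ H ∈ matchgateGens n,
      H * (tensor g * tensor f) = (tensor g * tensor f) * H := by
    intro H hH
    rcases hH with ⟨j, rfl⟩ | ⟨j, hj, rfl⟩
    · exact comm_of_signs _ _ _ (zf j) (zg j)
        (pauliZ_sign j f (zf j) (hzf j)) (pauliZ_sign j g (zg j) (hzg j)) (hZeq j)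
    · exact comm_of_signs _ _ _ (xf j * xf ⟨(j : ℕ) + 1, hj⟩) (xg j * xg ⟨(j : ℕ) + 1, hj⟩)
        (pauliXX_sign j hj f _ _ (hxf j) (hxf _))
        (pauliXX_sign j hj g _ _ (hxg j) (hxg _)) (hXeq j hj)
  refine ⟨part1, ?_⟩
  -- classify the slotwise products
  choose c R hc0 hR hm using fun j => pauli_mul (hf j) (hg j)
  have hRcomm : ∀ j, R j = 1 ∨ R j = σZ := by
    intro j
    have hcm : σZ * (g j * f j) = (g j * f j) * σZ := by
      calc σZ * (g j * f j) = (σZ * g j) * f j := by rw [mul_assoc]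
        _ = zg j • (g j * (σZ * f j)) := by rw [hzg j, Matrix.smul_mul, mul_assoc]
        _ = (zg j * zf j) • (g j * f j * σZ) := by
            rw [hzf j, Matrix.mul_smul, smul_smul, mul_assoc]
        _ = (g j * f j) * σZ := by rw [mul_comm (zg j), hZeq j, one_smul]
    rw [hm j, Matrix.mul_smul, Matrix.smul_mul] at hcm
    have hcm2 : σZ * R j = R j * σZ :=
      smul_right_injective Mat2 (hc0 j) hcm
    rcases hR j with h | h | h | h
    · exact Or.inl h
    · exact absurd (h ▸ hcm2) nZX
    · exact absurd (h ▸ hcm2) nZY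
    · exact Or.inr h
  -- per-slot x-sign of the product matches the x-sign determined by R
  have hr : ∀ k : Fin n, (R k = 1 ∧ xg k * xf k = 1) ∨ (R k = σZ ∧ xg k * xf k = -1) := by
    intro k
    have hu : σX * (g k * f k) = (xg k * xf k) • ((g k * f k) * σX) := by
      calc σX * (g k * f k) = (σX * g k) * f k := by rw [mul_assoc]
        _ = xg k • (g k * (σX * f k)) := by rw [hxg k, Matrix.smul_mul, mul_assoc]
        _ = (xg k * xf k) • (g k * f k * σX) := by
            rw [hxf k, Matrix.mul_smul, smul_smul, mul_assoc]
    rcases hRcomm k with h | h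
    · left
      refine ⟨h, ?_⟩
      have h1 : σX * (g k * f k) = (1 : ℂ) • ((g k * f k) * σX) := by
        rw [hm k, h, Matrix.mul_smul, Matrix.smul_mul, one_smul, mul_one, one_mul]
      have hne : (g k * f k) * σX ≠ 0 := by
        rw [hm k, h, Matrix.smul_mul, one_mul]
        exact smul_ne_zero (hc0 k) σX_ne
      exact aux_smul_cancel hne ((hu.symm).trans h1)
    · right
      refine ⟨h, ?_⟩
      have h1 : σX * (g k * f k) = (-1 : ℂ) • ((g k * f k) * σX) := by
        calc σX * (g k * f k) = c k • (σX * σZ) := by rw [hm k, h, Matrix.mul_smul]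
          _ = c k • ((-1 : ℂ) • (σZ * σX)) := by rw [hXZcomm]
          _ = (-1 : ℂ) • (c k • (σZ * σX)) := by rw [smul_smul, smul_smul, mul_comm]
          _ = (-1 : ℂ) • ((g k * f k) * σX) := by rw [hm k, h, Matrix.smul_mul]
      have hne : (g k * f k) * σX ≠ 0 := by
        rw [hm k, h, Matrix.smul_mul]
        refine smul_ne_zero (hc0 k) ?_
        rw [hZX]
        exact smul_ne_zero Complex.I_ne_zero σY_ne
      exact aux_smul_cancel hne ((hu.symm).trans h1)
  have hadj : ∀ (j : Fin n) (hj : (j : ℕ) + 1 < n), R j = R ⟨(j : ℕ) + 1, hj⟩ := by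
    intro j hj
    have hx := hXeq j hj
    rcases hr j with ⟨h1, h1'⟩ | ⟨h1, h1'⟩ <;>
      rcases hr ⟨(j : ℕ) + 1, hj⟩ with ⟨h2, h2'⟩ | ⟨h2, h2'⟩
    · rw [h1, h2]
    · exfalso
      have h20 : (2 : ℂ) = 0 := by
        linear_combination -hx + (xg ⟨(j : ℕ) + 1, hj⟩ * xf ⟨(j : ℕ) + 1, hj⟩) * h1' + h2'
      norm_num at h20
    · exfalso
      have h20 : (2 : ℂ) = 0 := by
        linear_combination -hx + (xg ⟨(j : ℕ) + 1, hj⟩ * xf ⟨(j : ℕ) + 1, hj⟩) * h1' - h2'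
      norm_num at h20
    · rw [h1, h2]
  have hconst : ∀ j : Fin n, R j = R ⟨0, hn⟩ := by
    have key : ∀ (k : ℕ) (hk : k < n), R ⟨k, hk⟩ = R ⟨0, hn⟩ := by
      intro k
      induction k with
      | zero => intro hk; rfl
      | succ m ih =>
        intro hk
        have hm' : m < n := by omega
        exact (hadj ⟨m, hm'⟩ hk).symm.trans (ih hm')
    intro j
    have := key (j : ℕ) j.2
    simpa using this
  have hSS : tensor g * tensor f = (∏ j, c j) • tensor R := by
    rw [aux_tensor_mul, show (fun i => g i * f i) = fun i => c i • R i from funext hm]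
    exact aux_tensor_smul c R
  rw [hSS]
  rcases hRcomm ⟨0, hn⟩ with h0 | h0
  · have hT : tensor R = 1 := by
      rw [show R = fun _ : Fin n => (1 : Mat2) from funext fun j => (hconst j).trans h0]
      exact aux_tensor_one
    rw [hT]
    exact Submodule.smul_mem _ _ (Submodule.subset_span (Set.mem_insert _ _))
  · have hT : tensor R = parity n := by
      rw [show R = fun _ : Fin n => σZ from funext fun j => (hconst j).trans h0]
      rfl
    rw [hT]
    exact Submodule.smul_mem _ _
      (Submodule.subset_span (Set.mem_insert_of_mem _ rfl))

end
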